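/- arXiv:1503.07922 — 2 statements merged into one kernel-verified Lean document; each statement's English description precedes it below -/
import Mathlib

section
/- Let (ζ_t^O : t ≥ 0) be the standard specifications randomly fluctuating intervals process with expansion parameter p ∈ (0,1) started from ζ_0 = {0}, and let f_t(x) = P(x ∈ ζ_t^O) be its occupancy function. Then for every t ≥ 0, f_t is an even function of x ∈ ℤ (f_t(x) = f_t(−x) for all x) and f_t is decreasing in |x| (f_t(x) ≥ f_t(y) whenever |x| ≤ |y|). -/
/- The standard specifications randomly fluctuating intervals process.
States: `none` = empty set, `some (l, r)` with `l ≤ r` = the integer interval {l, ..., r}. -/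

open MeasureTheory
open scoped ENNReal

namespace RFI

abbrev State := Option (ℤ × ℤ)

/-- Geometric distribution on ℕ: P(N = n) = (1 - p) * p ^ n. -/
noncomputable def geom (p : ℝ≥0∞) (hp : p < 1) : PMF ℕ :=
  ⟨fun n => (1 - p) * p ^ n, by
    refine ENNReal.summable.hasSum_iff.mpr ?_
    rw [ENNReal.tsum_mul_left, ENNReal.tsum_geometric]
    exact ENNReal.mul_inv_cancel
      (fun h => (not_le.mpr hp) (tsub_eq_zero_iff_le.mp h))
      (lt_of_le_of_lt tsub_le_self ENNReal.one_lt_top).ne⟩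

/-- All integer subintervals of {l, ..., r}, including the empty set. -/
noncomputable def subIntervals (l r : ℤ) : Finset State :=
  insert none
    (((Finset.Icc l r ×ˢ Finset.Icc l r).filter (fun q => q.1 ≤ q.2)).image
      (fun q => some q))

/-- Transition kernel: a uniform contraction followed by independent
geometric expansions of the two endpoints; the empty set is absorbing. -/
noncomputable def step (p : ℝ≥0∞) (hp : p < 1) : State → PMF State
  | none => PMF.pure none
  | some (l, r) =>
      (PMF.uniformOfFinset (subIntervals l r) (Finset.insert_nonempty _ _)).bind fun c =>
        match c with
        | none => PMF.pure none
        | some (a, b) =>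
            (geom p hp).bind fun nL =>
              (geom p hp).bind fun nR =>
                PMF.pure (some (a - nL, b + nR))

/-- Distribution at time `t` of the process started from `init`. -/
noncomputable def dist (p : ℝ≥0∞) (hp : p < 1) (init : State) : ℕ → PMF State
  | 0 => PMF.pure init
  | t + 1 => (dist p hp init t).bind (step p hp)

/-- `x` is occupied, i.e. belongs to the interval represented by the state. -/
def memS (x : ℤ) : State → Prop
  | none => False
  | some (l, r) => l ≤ x ∧ x ≤ r

/-- Occupancy function: probability that `x` belongs to the process at time `t`,
started from the singleton {a}. -/
noncomputable def occ (p : ℝ≥0∞) (hp : p < 1) (a : ℤ) (t : ℕ) (x : ℤ) : ℝ≥0∞ :=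
  (dist p hp (some (a, a)) t).toOuterMeasure {s | memS x s}

/-!
Track the law of the left endpoint among intervals of each fixed length. Started from `{0}`, at
every time and for every length `m` this law is symmetric unimodal about `-m / 2`. A step preserves
this: the probability of jumping from `[l0, l0 + m0]` to `[l, l + m]` depends only on `m0`, `m` and
the shift `l - l0`, and as a function of the shift it is an increasing function of the overlap of
the two intervals, hence symmetric unimodal about `(m0 - m) / 2`. The new law is therefore a
mixture of convolutions of symmetric unimodal sequences, which are again symmetric unimodal
(decompose one factor into a mixture of uniform windows centred at its centre). The occupancy
function is a mixture of convolutions of the same kind with the windows `[0, m]`, hence symmetric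
unimodal about `0`.
-/

open Filter Topology

lemma tsum_option_eq_tsum_some {α : Type*} {f : Option α → ℝ≥0∞} (h : f none = 0) :
    ∑' s, f s = ∑' a, f (some a) := by
  refine ((Option.some_injective α).tsum_eq fun s hs => ?_).symm
  cases s with
  | none => exact absurd h hs
  | some a => exact ⟨a, rfl⟩

lemma tsum_tsub_succ_of_antitone {f : ℕ → ℝ≥0∞} (hf : Antitone f)
    (hlim : Tendsto f atTop (𝓝 0)) :
    ∑' n, (f n - f (n + 1)) = f 0 := by
  have partial_sum : ∀ N, ∑ n ∈ Finset.range N, (f n - f (n + 1)) = f 0 - f N := by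
    intro N
    induction N with
    | zero => simp
    | succ N ih =>
      rw [Finset.sum_range_succ, ih, tsub_add_tsub_cancel (hf N.zero_le) (hf N.le_succ)]
  refine HasSum.tsum_eq ((ENNReal.hasSum_iff_tendsto_nat _).2 ?_)
  simpa [partial_sum] using ENNReal.Tendsto.sub tendsto_const_nhds hlim (.inr ENNReal.zero_ne_top)

lemma tsum_indicator_Ici_tsub {f : ℤ → ℝ≥0∞} {Y : ℤ} (hf : AntitoneOn f (Set.Ici Y))
    (hfin : ∑' k, f k ≠ ⊤) :
    ∑' k, (Set.Ici Y).indicator (fun k => f k - f (k + 1)) k = f Y := by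
  have hinj : Function.Injective fun n : ℕ => Y + n := fun m n h => by simpa using h
  have hsupp : Function.support ((Set.Ici Y).indicator fun k => f k - f (k + 1)) ⊆
      Set.range fun n : ℕ => Y + n := by
    intro k hk
    have hYk : k ∈ Set.Ici Y := Set.mem_of_indicator_ne_zero hk
    rw [Set.mem_Ici] at hYk
    exact ⟨(k - Y).toNat, by dsimp only; omega⟩
  rw [← hinj.tsum_eq hsupp]
  have tail_anti : Antitone fun n : ℕ => f (Y + n) := fun m n hmn =>
    hf (by simp) (by simp) (by simpa using hmn)
  have tail_lim : Tendsto (fun n : ℕ => f (Y + n)) atTop (𝓝 0) :=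
    ENNReal.tendsto_atTop_zero_of_tsum_ne_top
      (ne_top_of_le_ne_top hfin (ENNReal.tsum_comp_le_tsum_of_injective hinj f))
  simpa [add_assoc] using tsum_tsub_succ_of_antitone tail_anti tail_lim

/-- Symmetric about `c / 2` and nonincreasing away from it; encoding the centre by `c` allows
half-integer centres. -/
def IsSymmUnimodal (c : ℤ) (g : ℤ → ℝ≥0∞) : Prop :=
  (∀ x, g x = g (c - x)) ∧ ∀ x, c ≤ 2 * x → g (x + 1) ≤ g x

lemma isSymmUnimodal_indicator_Icc (a b : ℤ) :
    IsSymmUnimodal (a + b) ((Set.Icc a b).indicator 1) := by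
  refine ⟨fun x => ?_, fun x hx => ?_⟩
  · simp only [Set.indicator_apply, Set.mem_Icc]
    exact if_congr (by omega) rfl rfl
  · simp only [Set.indicator_apply, Set.mem_Icc, Pi.one_apply]
    split_ifs <;> first | exact le_rfl | exact zero_le | (exfalso; omega)

namespace IsSymmUnimodal

variable {c d : ℤ} {g u v : ℤ → ℝ≥0∞}

lemma antitoneOn (h : IsSymmUnimodal c g) : AntitoneOn g {x | c ≤ 2 * x} :=
  antitoneOn_of_succ_le (Set.ordConnected_iff.2 fun _ hx _ _ _ _ hz => by
      change c ≤ 2 * _ at hx ⊢; have := hz.1; omega)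
    fun x _ hx _ => by simpa [Order.succ_eq_add_one] using h.2 x hx

lemma apply_max_sub (h : IsSymmUnimodal c g) (x : ℤ) : g (max x (c - x)) = g x := by
  rcases max_choice x (c - x) with hx | hx <;> rw [hx]
  exact (h.1 x).symm

lemma le_of_abs_le (h : IsSymmUnimodal c g) {x y : ℤ} (hxy : |2 * y - c| ≤ |2 * x - c|) :
    g x ≤ g y := by
  rw [← h.apply_max_sub x, ← h.apply_max_sub y]
  refine h.antitoneOn (show c ≤ _ by omega) (show c ≤ _ by omega) ?_
  rcases abs_cases (2 * x - c) with hx | hx <;> rcases abs_cases (2 * y - c) with hy | hy <;>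
    omega

lemma const_mul (h : IsSymmUnimodal c g) (a : ℝ≥0∞) : IsSymmUnimodal c fun x => a * g x :=
  ⟨fun x => congrArg (a * ·) (h.1 x), fun x hx => mul_le_mul_right (h.2 x hx) a⟩

lemma tsum {ι : Type*} {g : ι → ℤ → ℝ≥0∞} (h : ∀ i, IsSymmUnimodal c (g i)) :
    IsSymmUnimodal c fun x => ∑' i, g i x :=
  ⟨fun x => tsum_congr fun i => (h i).1 x,
    fun x hx => ENNReal.tsum_le_tsum fun i => (h i).2 x hx⟩

lemma sum_Icc (hv : IsSymmUnimodal c v) (a b : ℤ) :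
    IsSymmUnimodal (a + b + c) fun x => ∑ y ∈ Finset.Icc a b, v (x - y) := by
  refine ⟨fun x => ?_, fun x hx => ?_⟩
  · have mem : ∀ y ∈ Finset.Icc a b, a + b - y ∈ Finset.Icc a b := fun y hy => by
      rw [Finset.mem_Icc] at hy ⊢; omega
    refine Finset.sum_nbij' _ _ mem mem (fun y _ => by ring) (fun y _ => by ring) fun y _ => ?_
    rw [hv.1]; ring_nf
  dsimp only
  rcases lt_or_ge b a with hba | hab
  · simp [Finset.Icc_eq_empty_of_lt hba]
  -- the two window sums differ only in the terms `v (x + 1 - a)` and `v (x - b)`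
  have shift : ∑ y ∈ Finset.Ioc a b, v (x + 1 - y) = ∑ y ∈ Finset.Ico a b, v (x - y) := by
    refine Finset.sum_nbij' (· - 1) (· + 1) ?_ ?_ (fun y _ => by ring) (fun y _ => by ring)
      fun y _ => by ring_nf
    all_goals intro y hy; simp only [Finset.mem_Ioc, Finset.mem_Ico] at hy ⊢; omega
  rw [← Finset.add_sum_Ioc_eq_sum_Icc hab, ← Finset.sum_Ico_add_eq_sum_Icc hab, shift, add_comm]
  refine add_le_add le_rfl (hv.le_of_abs_le ?_)
  rw [abs_le]
  constructor <;> rw [abs_of_nonneg (by omega)] <;> omega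

lemma eq_tsum_mul_indicator_Icc (hu : IsSymmUnimodal c u) (hfin : ∑' y, u y ≠ ⊤) (y : ℤ) :
    u y = ∑' k, (if c ≤ 2 * k then u k - u (k + 1) else 0) *
      (Set.Icc (c - k) k).indicator 1 y := by
  set Y := max y (c - y)
  have layer : ∀ k, (if c ≤ 2 * k then u k - u (k + 1) else 0) *
      (Set.Icc (c - k) k).indicator 1 y = (Set.Ici Y).indicator (fun k => u k - u (k + 1)) k := by
    intro k
    by_cases hk : Y ≤ k
    · rw [if_pos (by omega), Set.indicator_of_mem (by simp only [Set.mem_Icc]; omega),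
        Set.indicator_of_mem (Set.mem_Ici.2 hk), Pi.one_apply, mul_one]
    · rw [Set.indicator_of_notMem (by simp only [Set.mem_Icc]; omega),
        Set.indicator_of_notMem (mt Set.mem_Ici.1 hk), mul_zero]
  have tail_anti : AntitoneOn u (Set.Ici Y) := hu.antitoneOn.mono fun k hk => by
    simp only [Set.mem_Ici] at hk; change c ≤ 2 * k; omega
  rw [tsum_congr layer, tsum_indicator_Ici_tsub tail_anti hfin, hu.apply_max_sub]

theorem conv (hu : IsSymmUnimodal c u) (hv : IsSymmUnimodal d v) (hfin : ∑' y, u y ≠ ⊤) :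
    IsSymmUnimodal (c + d) fun x => ∑' y, u y * v (x - y) := by
  set w : ℤ → ℝ≥0∞ := fun k => if c ≤ 2 * k then u k - u (k + 1) else 0
  have layers : ∀ x,
      ∑' y, u y * v (x - y) = ∑' k, w k * ∑ y ∈ Finset.Icc (c - k) k, v (x - y) := by
    intro x
    calc ∑' y, u y * v (x - y)
        = ∑' y, ∑' k, w k * (Set.Icc (c - k) k).indicator (fun y => v (x - y)) y := by
          refine tsum_congr fun y => ?_
          rw [hu.eq_tsum_mul_indicator_Icc hfin y, ← ENNReal.tsum_mul_right]
          refine tsum_congr fun k => ?_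
          rw [mul_assoc, ← Set.indicator_mul_left _ _ fun y => v (x - y)]
          simp only [Pi.one_apply, one_mul, w]
      _ = ∑' k, w k * ∑ y ∈ Finset.Icc (c - k) k, v (x - y) := by
          rw [ENNReal.tsum_comm]
          refine tsum_congr fun k => ?_
          rw [ENNReal.tsum_mul_left, ← Finset.coe_Icc, ← sum_eq_tsum_indicator]
  simp_rw [layers]
  refine IsSymmUnimodal.tsum fun k => ?_
  simpa using (hv.sum_Icc (c - k) k).const_mul (w k)

end IsSymmUnimodal

lemma tsum_state_eq {f : State → ℝ≥0∞} (h : f none = 0) :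
    ∑' s, f s = ∑' m, ∑' l, f (some (l, l + m)) := by
  have shift (l : ℤ) : ∑' r, f (some (l, r)) = ∑' m, f (some (l, l + m)) :=
    ((Equiv.addLeft l).tsum_eq fun r => f (some (l, r))).symm
  rw [tsum_option_eq_tsum_some h, ENNReal.tsum_prod', tsum_congr shift, ENNReal.tsum_comm]

lemma mem_subIntervals {l0 r0 a b : ℤ} :
    some (a, b) ∈ subIntervals l0 r0 ↔ l0 ≤ a ∧ a ≤ b ∧ b ≤ r0 := by
  simp only [subIntervals, Finset.mem_insert, reduceCtorEq, false_or, Finset.mem_image,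
    Finset.mem_filter, Finset.mem_product, Finset.mem_Icc, Option.some.injEq, Prod.exists,
    Prod.mk.injEq]
  constructor
  · rintro ⟨a, b, ⟨⟨⟨h1, -⟩, -, h2⟩, h3⟩, rfl, rfl⟩
    exact ⟨h1, h3, h2⟩
  · rintro ⟨h1, h2, h3⟩
    exact ⟨a, b, ⟨⟨⟨h1, by omega⟩, by omega, h3⟩, h2⟩, rfl, rfl⟩

lemma card_subIntervals_add (l r d : ℤ) :
    (subIntervals (l + d) (r + d)).card = (subIntervals l r).card := by
  let shift (e : ℤ) : State → State := Option.map fun q => (q.1 + e, q.2 + e)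
  refine Finset.card_nbij' (shift (-d)) (shift d) ?_ ?_ ?_ ?_
  all_goals
    rintro (_ | ⟨a, b⟩) hs
    · simp [shift, subIntervals]
  all_goals simp only [shift, Finset.mem_coe, Option.map_some, mem_subIntervals] at hs ⊢
  all_goals first | omega | simp

lemma geom_apply (p : ℝ≥0∞) (hp : p < 1) (n : ℕ) : geom p hp n = (1 - p) * p ^ n := rfl

lemma geom_expansion_apply (p : ℝ≥0∞) (hp : p < 1) (a b l r : ℤ) :
    ((geom p hp).bind fun nL => (geom p hp).bind fun nR =>
        PMF.pure (some (a - nL, b + nR)) : PMF State) (some (l, r))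
      = if l ≤ a ∧ b ≤ r then geom p hp (a - l).toNat * geom p hp (r - b).toNat else 0 := by
  simp only [PMF.bind_apply, PMF.pure_apply, Option.some.injEq, Prod.mk.injEq, mul_ite, mul_one,
    mul_zero, ← ENNReal.tsum_mul_left]
  rw [← ENNReal.tsum_prod]
  split_ifs with h
  · rw [tsum_eq_single ((a - l).toNat, (r - b).toNat) fun q hq => if_neg ?_, if_pos (by omega)]
    rintro ⟨h1, h2⟩
    exact hq (Prod.ext (by omega) (by omega))
  · exact ENNReal.tsum_eq_zero.2 fun q => if_neg (by omega)

/-- Up to the factor `1 / #I(ζ)`, the probability of jumping from `ζ` to an interval of length `m`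
whose overlap with `ζ` has length `D`: the contraction `[a, b]` must lie in the overlap (translated
to `[0, D]`), and is then expanded onto the target with probability `(1 - p)^2 p^(m - (b - a))`. -/
noncomputable def expansionWeight (p : ℝ≥0∞) (m D : ℤ) : ℝ≥0∞ :=
  ∑' a, ∑' b,
    if 0 ≤ a ∧ a ≤ b ∧ b ≤ D then (1 - p) ^ 2 * p ^ (m - (b - a)).toNat else 0

lemma step_some_some (p : ℝ≥0∞) (hp : p < 1) (l0 r0 l r : ℤ) :
    step p hp (some (l0, r0)) (some (l, r)) =
      ((subIntervals l0 r0).card : ℝ≥0∞)⁻¹ *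
        expansionWeight p (r - l) (min r0 r - max l0 l) := by
  rw [step, PMF.bind_apply, tsum_option_eq_tsum_some (by simp), ENNReal.tsum_prod',
    expansionWeight, ← ENNReal.tsum_mul_left, ← (Equiv.addRight (max l0 l)).tsum_eq]
  refine tsum_congr fun a => ?_
  rw [← ENNReal.tsum_mul_left, ← (Equiv.addRight (max l0 l)).tsum_eq]
  refine tsum_congr fun b => ?_
  erw [PMF.uniformOfFinset_apply]
  simp only [geom_expansion_apply, mem_subIntervals, Equiv.coe_addRight]
  by_cases h : 0 ≤ a ∧ a ≤ b ∧ b ≤ min r0 r - max l0 l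
  · rw [if_pos (by omega), if_pos (by omega), if_pos h, geom_apply, geom_apply,
      show (r - l - (b - a)).toNat = (a + max l0 l - l).toNat + (r - (b + max l0 l)).toNat by omega,
      pow_add]
    ring
  · rw [if_neg h, mul_zero]
    split_ifs <;> first | (exfalso; omega) | simp

lemma expansionWeight_mono (p : ℝ≥0∞) (m : ℤ) : Monotone (expansionWeight p m) :=
  fun _ _ hD => ENNReal.tsum_le_tsum fun _ => ENNReal.tsum_le_tsum fun _ => by
    split_ifs <;> first | exact le_rfl | exact zero_le | (exfalso; omega)

noncomputable def jumpWeight (p : ℝ≥0∞) (m0 m z : ℤ) : ℝ≥0∞ :=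
  ((subIntervals 0 m0).card : ℝ≥0∞)⁻¹ * expansionWeight p m (min m0 (z + m) - max 0 z)

lemma step_eq_jumpWeight (p : ℝ≥0∞) (hp : p < 1) (l0 m0 l m : ℤ) :
    step p hp (some (l0, l0 + m0)) (some (l, l + m)) = jumpWeight p m0 m (l - l0) := by
  rw [step_some_some, jumpWeight, ← card_subIntervals_add 0 m0 l0, zero_add, add_comm m0,
    add_sub_cancel_left]
  congr 2
  omega

-- the overlap length `min m0 (z + m) - max 0 z` is symmetric about `(m0 - m) / 2` and unimodal
lemma isSymmUnimodal_jumpWeight (p : ℝ≥0∞) (m0 m : ℤ) :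
    IsSymmUnimodal (m0 - m) (jumpWeight p m0 m) :=
  ⟨fun z => by rw [jumpWeight, jumpWeight]; congr 2; omega,
    fun z hz => mul_le_mul_right (expansionWeight_mono p m (by omega)) _⟩

/-- Intervals of each fixed length are centred at `0` in law. -/
def IsCentredSymmUnimodal (μ : PMF State) : Prop :=
  ∀ m : ℤ, IsSymmUnimodal (-m) fun l => μ (some (l, l + m))

namespace IsCentredSymmUnimodal

variable {μ : PMF State}

lemma tsum_mul (hμ : IsCentredSymmUnimodal μ) {c : ℤ} {K : ℤ → ℤ → ℝ≥0∞}
    (hK : ∀ m, IsSymmUnimodal (m + c) (K m)) :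
    IsSymmUnimodal c fun x => ∑' m, ∑' l, μ (some (l, l + m)) * K m (x - l) := by
  refine IsSymmUnimodal.tsum fun m => ?_
  have hfin : ∑' l, μ (some (l, l + m)) ≠ ⊤ :=
    ne_top_of_le_ne_top μ.tsum_coe_ne_top (ENNReal.tsum_comp_le_tsum_of_injective
      (fun l l' h => by simpa using h) μ)
  simpa using (hμ m).conv (hK m) hfin

lemma bind_step (hμ : IsCentredSymmUnimodal μ) (p : ℝ≥0∞) (hp : p < 1) :
    IsCentredSymmUnimodal (μ.bind (step p hp)) := by
  intro m
  have transition : ∀ l, (μ.bind (step p hp)) (some (l, l + m)) =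
      ∑' m0, ∑' l0, μ (some (l0, l0 + m0)) * jumpWeight p m0 m (l - l0) := by
    intro l
    rw [PMF.bind_apply, tsum_state_eq (by simp [step])]
    simp only [step_eq_jumpWeight]
  simp_rw [transition]
  exact hμ.tsum_mul fun m0 => sub_eq_add_neg m0 m ▸ isSymmUnimodal_jumpWeight p m0 m

end IsCentredSymmUnimodal

lemma isCentredSymmUnimodal_pure : IsCentredSymmUnimodal (PMF.pure (some (0, 0))) := by
  intro m
  by_cases hm : m = 0
  · subst hm
    convert isSymmUnimodal_indicator_Icc 0 0 using 2 with l
    · rfl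
    rw [PMF.pure_apply, Set.indicator_apply]
    simp [le_antisymm_iff]
  · have vanish : (fun l => PMF.pure (some ((0 : ℤ), (0 : ℤ))) (some (l, l + m))) = 0 := by
      funext l
      simp only [PMF.pure_apply, Option.some.injEq, Prod.mk.injEq, Pi.zero_apply,
        ite_eq_right_iff, one_ne_zero, imp_false, not_and]
      omega
    rw [vanish]
    exact ⟨fun _ => rfl, fun _ _ => le_rfl⟩

lemma isCentredSymmUnimodal_dist (p : ℝ≥0∞) (hp : p < 1) (t : ℕ) :
    IsCentredSymmUnimodal (dist p hp (some (0, 0)) t) := by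
  induction t with
  | zero => exact isCentredSymmUnimodal_pure
  | succ t ih => exact ih.bind_step p hp

lemma occ_eq_tsum (p : ℝ≥0∞) (hp : p < 1) (t : ℕ) (x : ℤ) :
    occ p hp 0 t x = ∑' m, ∑' l, dist p hp (some (0, 0)) t (some (l, l + m)) *
      (Set.Icc 0 m).indicator 1 (x - l) := by
  rw [occ, PMF.toOuterMeasure_apply, tsum_state_eq (by simp [memS])]
  refine tsum_congr fun m => tsum_congr fun l => ?_
  simp only [Set.indicator_apply, Set.mem_ofPred_eq, memS, Set.mem_Icc, Pi.one_apply, mul_ite,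
    mul_one, mul_zero]
  exact if_congr (by omega) rfl rfl

lemma isSymmUnimodal_occ (p : ℝ≥0∞) (hp : p < 1) (t : ℕ) :
    IsSymmUnimodal 0 (occ p hp 0 t) := by
  have h := (isCentredSymmUnimodal_dist p hp t).tsum_mul (c := 0) fun m => by
    simpa using isSymmUnimodal_indicator_Icc 0 m
  rwa [← funext (occ_eq_tsum p hp t)] at h

theorem occupancy_even_and_decreasing_general (p : ℝ≥0∞) (hp1 : p < 1) (t : ℕ) :
    (∀ x : ℤ, occ p hp1 0 t x = occ p hp1 0 t (-x)) ∧
    (∀ x y : ℤ, |x| ≤ |y| → occ p hp1 0 t y ≤ occ p hp1 0 t x) := by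
  have h := isSymmUnimodal_occ p hp1 t
  refine ⟨fun x => by simpa using h.1 x, fun x y hxy => h.le_of_abs_le ?_⟩
  simpa [abs_mul] using hxy

/-- the occupancy function of the process started from {0}
is even and decreasing in |x|. -/
theorem occupancy_even_and_decreasing (p : ℝ≥0∞) (hp0 : 0 < p) (hp1 : p < 1) (t : ℕ) :
    (∀ x : ℤ, occ p hp1 0 t x = occ p hp1 0 t (-x)) ∧
    (∀ x y : ℤ, |x| ≤ |y| → occ p hp1 0 t y ≤ occ p hp1 0 t x) :=
  occupancy_even_and_decreasing_general p hp1 t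

end RFI
end

section
/- Let (ζ_t^O : t ≥ 0) be the standard specifications randomly fluctuating intervals process with expansion parameter p ∈ (0,1) started from ζ_0 = {0}. Then for every t ≥ 0 and every integer x ≥ 0, P(x ∈ ζ_t^O) ≥ P(x + 1 ∈ ζ_t^O). -/
/-!
Let μ_t be the law of ζ_t^O. By induction on t, μ_t is invariant under x ↦ -x and, among the
translates of a fixed interval, decreases as the midpoint moves away from 0. The one-step
probability of going from I₀ to J depends only on |I₀|, |J| and |I₀ ∩ J|, increasingly in
|I₀ ∩ J|; so it is invariant under the isometries of ℤ, and it does not increase when a target J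
right of -1/2 is replaced by its mirror image in -1/2, provided I₀ also lies right of -1/2.
Pairing every interval with its mirror image in -1/2 and applying the rearrangement inequality
shows that the invariant survives one step. Finally, the intervals containing x + 1 but not x
are those starting at x + 1; their mirror images in x + 1/2 contain x but not x + 1 and, as
x ≥ 0, lie closer to the origin, hence are at least as likely.
-/

/- The standard specifications randomly fluctuating intervals process.
States: `none` = empty set, `some (l, r)` with `l ≤ r` = the integer interval {l, ..., r}. -/

open MeasureTheory
open scoped ENNReal

theorem ENNReal.mul_add_mul_le_mul_add_mul' {a b c d : ℝ≥0∞} (hba : b ≤ a) (hdc : d ≤ c) :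
    a * d + b * c ≤ a * c + b * d := by
  obtain ⟨e, rfl⟩ := exists_add_of_le hba
  calc (b + e) * d + b * c = b * c + b * d + e * d := by ring
    _ ≤ b * c + b * d + e * c := by gcongr
    _ = (b + e) * c + b * d := by ring

theorem ENNReal.tsum_le_tsum_of_involutive {α : Type*} {σ : α → α} (hσ : Function.Involutive σ)
    {f g : α → ℝ≥0∞} (h : ∀ a, f a + f (σ a) ≤ g a + g (σ a)) : ∑' a, f a ≤ ∑' a, g a := by
  have hpair : ∀ φ : α → ℝ≥0∞, ∑' a, (φ a + φ (σ a)) = 2 * ∑' a, φ a := fun φ => by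
    rw [ENNReal.tsum_add, ← hσ.coe_toPerm, Equiv.tsum_eq, two_mul]
  refine (ENNReal.mul_le_mul_iff_right two_ne_zero ENNReal.ofNat_ne_top).mp ?_
  rw [← hpair, ← hpair]
  exact ENNReal.tsum_le_tsum h

namespace RFI

noncomputable def geomMass (p : ℝ≥0∞) (d : ℤ) : ℝ≥0∞ :=
  if 0 ≤ d then (1 - p) * p ^ d.toNat else 0

lemma tsum_geom_mul_ite_eq (p : ℝ≥0∞) (hp : p < 1) (d : ℤ) :
    ∑' n : ℕ, geom p hp n * (if (n : ℤ) = d then 1 else 0) = geomMass p d := by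
  by_cases hd : 0 ≤ d
  · rw [tsum_eq_single d.toNat fun n hn => by rw [if_neg (by omega), mul_zero],
      if_pos (by omega), mul_one, geomMass, if_pos hd]
    rfl
  · simp only [geomMass, if_neg hd]
    exact ENNReal.tsum_eq_zero.mpr fun n => by rw [if_neg (by omega), mul_zero]

noncomputable def expand (p : ℝ≥0∞) (hp : p < 1) : State → PMF State
  | none => PMF.pure none
  | some (a, b) =>
      (geom p hp).bind fun nL => (geom p hp).bind fun nR => PMF.pure (some (a - nL, b + nR))

lemma subIntervals_nonempty (l r : ℤ) : (subIntervals l r).Nonempty :=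
  Finset.insert_nonempty _ _

lemma step_some (p : ℝ≥0∞) (hp : p < 1) (l r : ℤ) :
    step p hp (some (l, r)) =
      (PMF.uniformOfFinset (subIntervals l r) (subIntervals_nonempty l r)).bind (expand p hp) :=
  rfl

lemma expand_none_apply (p : ℝ≥0∞) (hp : p < 1) (l r : ℤ) :
    expand p hp none (some (l, r)) = 0 :=
  PMF.pure_apply_of_ne _ _ (by simp)

lemma expand_some_apply (p : ℝ≥0∞) (hp : p < 1) (q : ℤ × ℤ) (l r : ℤ) :
    expand p hp (some q) (some (l, r)) = geomMass p (q.1 - l) * geomMass p (r - q.2) := by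
  obtain ⟨a, b⟩ := q
  have hpure : ∀ nL nR : ℕ, (PMF.pure (some (a - nL, b + nR) : State)) (some (l, r)) =
      (if (nL : ℤ) = a - l then 1 else 0) * (if (nR : ℤ) = r - b then 1 else 0) := by
    intro nL nR
    rw [ite_zero_mul_ite_zero, mul_one, PMF.pure_apply]
    simp only [Option.some.injEq, Prod.mk.injEq]
    exact if_congr (by omega) rfl rfl
  simp_rw [expand, PMF.bind_apply, hpure, mul_left_comm (geom p hp _), ENNReal.tsum_mul_left,
    tsum_geom_mul_ite_eq, ← mul_assoc, ENNReal.tsum_mul_right, tsum_geom_mul_ite_eq]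

noncomputable def subIntervalEnds (l r : ℤ) : Finset (ℤ × ℤ) :=
  (Finset.Icc l r ×ˢ Finset.Icc l r).filter fun q => q.1 ≤ q.2

lemma mem_subIntervalEnds {l r : ℤ} {q : ℤ × ℤ} :
    q ∈ subIntervalEnds l r ↔ l ≤ q.1 ∧ q.1 ≤ q.2 ∧ q.2 ≤ r := by
  simp only [subIntervalEnds, Finset.mem_filter, Finset.mem_product, Finset.mem_Icc]
  omega

lemma subIntervals_eq_insert_image (l r : ℤ) :
    subIntervals l r = insert none ((subIntervalEnds l r).image some) := rfl

noncomputable def lengthSum {M : Type*} [AddCommMonoid M] (f : ℤ → M) (n : ℤ) : M :=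
  ∑ q ∈ subIntervalEnds 0 n, f (q.2 - q.1)

lemma sum_subIntervalEnds {M : Type*} [AddCommMonoid M] (f : ℤ → M) (l r : ℤ) :
    ∑ q ∈ subIntervalEnds l r, f (q.2 - q.1) = lengthSum f (r - l) :=
  Finset.sum_nbij' (fun q => (q.1 - l, q.2 - l)) (fun q => (q.1 + l, q.2 + l))
    (fun q hq => by simp only [mem_subIntervalEnds] at hq ⊢; omega)
    (fun q hq => by simp only [mem_subIntervalEnds] at hq ⊢; omega)
    (fun q _ => by simp) (fun q _ => by simp) (fun q _ => by simp)

lemma lengthSum_mono {M : Type*} [AddCommMonoid M] [PartialOrder M] [CanonicallyOrderedAdd M]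
    (f : ℤ → M) {m n : ℤ} (h : m ≤ n) : lengthSum f m ≤ lengthSum f n :=
  Finset.sum_le_sum_of_subset fun q hq => by
    rw [mem_subIntervalEnds] at hq ⊢
    omega

lemma card_subIntervals (l r : ℤ) :
    ((subIntervals l r).card : ℝ≥0∞) = lengthSum (fun _ => 1) (r - l) + 1 := by
  rw [subIntervals_eq_insert_image, Finset.card_insert_of_notMem (by simp),
    Finset.card_image_of_injective _ (Option.some_injective _), Finset.card_eq_sum_ones,
    ← sum_subIntervalEnds]
  push_cast
  rfl

lemma geomMass_mul_geomMass (p : ℝ≥0∞) (a b : ℤ) :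
    geomMass p a * geomMass p b = if 0 ≤ a ∧ 0 ≤ b then (1 - p) ^ 2 * p ^ (a + b).toNat else 0 := by
  by_cases ha : 0 ≤ a <;> by_cases hb : 0 ≤ b <;> simp only [geomMass, ha, hb, and_self,
    and_false, false_and, if_true, if_false, mul_zero, zero_mul]
  rw [Int.toNat_add ha hb, pow_add]
  ring

-- The probability of a step from I₀ to J, where n₀ + 1, m + 1, n + 1 are the lengths of I₀, I₀ ∩ J
-- and J: a subinterval q of I₀ expands onto J iff q ⊆ J, with probability (1 - p)² p ^ (|J| - |q|).
noncomputable def stepMass (p : ℝ≥0∞) (n₀ m n : ℤ) : ℝ≥0∞ :=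
  (lengthSum (fun _ => 1) n₀ + 1)⁻¹ * ((1 - p) ^ 2 * lengthSum (fun k => p ^ (n - k).toNat) m)

lemma step_some_some_s2 (p : ℝ≥0∞) (hp : p < 1) (l₀ r₀ l r : ℤ) :
    step p hp (some (l₀, r₀)) (some (l, r)) =
      stepMass p (r₀ - l₀) (min r₀ r - max l₀ l) (r - l) := by
  have hsummand : ∀ q : ℤ × ℤ, geomMass p (q.1 - l) * geomMass p (r - q.2) =
      if l ≤ q.1 ∧ q.2 ≤ r then (1 - p) ^ 2 * p ^ (r - l - (q.2 - q.1)).toNat else 0 := by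
    intro q
    rw [geomMass_mul_geomMass]
    exact if_congr (by omega) (by ring_nf) rfl
  have hoverlap : (subIntervalEnds l₀ r₀).filter (fun q => l ≤ q.1 ∧ q.2 ≤ r) =
      subIntervalEnds (max l₀ l) (min r₀ r) := by
    ext q
    simp only [Finset.mem_filter, mem_subIntervalEnds]
    omega
  rw [step_some, PMF.bind_apply,
    tsum_eq_sum (s := subIntervals l₀ r₀) fun c hc => by
      rw [PMF.uniformOfFinset_apply, if_neg hc, zero_mul],
    Finset.sum_congr rfl fun c hc => by rw [PMF.uniformOfFinset_apply, if_pos hc],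
    ← Finset.mul_sum, card_subIntervals, subIntervals_eq_insert_image, Finset.sum_insert (by simp),
    Finset.sum_image (Option.some_injective _).injOn]
  simp only [expand_none_apply, zero_add, expand_some_apply, hsummand]
  rw [← Finset.sum_filter, hoverlap,
    sum_subIntervalEnds (fun k => (1 - p) ^ 2 * p ^ (r - l - k).toNat), stepMass]
  simp only [lengthSum, Finset.mul_sum]

def reflect (c : ℤ) (I : ℤ × ℤ) : ℤ × ℤ := (c - I.2, c - I.1)

lemma reflect_involutive (c : ℤ) : Function.Involutive (reflect c) := fun I => by
  simp [reflect]

lemma step_translate (p : ℝ≥0∞) (hp : p < 1) (I J : ℤ × ℤ) (c : ℤ) :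
    step p hp (some (I + (c, c))) (some (J + (c, c))) = step p hp (some I) (some J) := by
  obtain ⟨l₀, r₀⟩ := I
  obtain ⟨l, r⟩ := J
  simp only [Prod.mk_add_mk, step_some_some_s2]
  congr 1 <;> omega

lemma step_reflect (p : ℝ≥0∞) (hp : p < 1) (I J : ℤ × ℤ) (c : ℤ) :
    step p hp (some (reflect c I)) (some (reflect c J)) = step p hp (some I) (some J) := by
  obtain ⟨l₀, r₀⟩ := I
  obtain ⟨l, r⟩ := J
  simp only [reflect, step_some_some_s2]
  congr 1 <;> omega

lemma step_reflect_neg_one_le (p : ℝ≥0∞) (hp : p < 1) (I J : ℤ × ℤ) (hI : -1 ≤ I.1 + I.2)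
    (hJ : -1 ≤ J.1 + J.2) :
    step p hp (some I) (some (reflect (-1) J)) ≤ step p hp (some I) (some J) := by
  obtain ⟨l₀, r₀⟩ := I
  obtain ⟨l, r⟩ := J
  simp only [reflect, step_some_some_s2] at hI hJ ⊢
  rw [show -1 - l - (-1 - r) = r - l by ring]
  unfold stepMass
  gcongr
  exact lengthSum_mono _ (by omega)

lemma step_none_apply_some (p : ℝ≥0∞) (hp : p < 1) (J : ℤ × ℤ) : step p hp none (some J) = 0 :=
  PMF.pure_apply_of_ne _ _ (by simp)

lemma bind_step_apply_some (p : ℝ≥0∞) (hp : p < 1) (μ : PMF State) (J : ℤ × ℤ) :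
    μ.bind (step p hp) (some J) = ∑' I : ℤ × ℤ, μ (some I) * step p hp (some I) (some J) := by
  rw [PMF.bind_apply]
  refine ((Option.some_injective _).tsum_eq fun s hs => ?_).symm
  cases s with
  | none => simp [step_none_apply_some] at hs
  | some I => exact ⟨I, rfl⟩

-- `-1 ≤ I.1 + I.2` says that the midpoint of `I` is at least -1/2.
structure IsSymmUnimodal_s2 (μ : PMF State) : Prop where
  symm : ∀ I : ℤ × ℤ, μ (some (reflect 0 I)) = μ (some I)
  antitone : ∀ I : ℤ × ℤ, -1 ≤ I.1 + I.2 → μ (some (I + (1, 1))) ≤ μ (some I)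

lemma IsSymmUnimodal_s2.bind_step (p : ℝ≥0∞) (hp : p < 1) {μ : PMF State} (hμ : IsSymmUnimodal_s2 μ) :
    IsSymmUnimodal_s2 (μ.bind (step p hp)) := by
  refine ⟨fun J => ?_, fun J hJ => ?_⟩
  · rw [bind_step_apply_some, bind_step_apply_some, ← Equiv.tsum_eq (reflect_involutive 0).toPerm]
    exact tsum_congr fun I => by
      rw [Function.Involutive.coe_toPerm, hμ.symm, step_reflect]
  rw [bind_step_apply_some, bind_step_apply_some,
    ← Equiv.tsum_eq (Equiv.addRight ((1, 1) : ℤ × ℤ))]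
  simp only [Equiv.coe_addRight, step_translate]
  refine ENNReal.tsum_le_tsum_of_involutive (reflect_involutive (-1)) fun I => ?_
  have hμ_ψ_succ : μ (some (reflect (-1) I + (1, 1))) = μ (some I) := by
    rw [← hμ.symm I]
    congr 2
    simp only [reflect, Prod.mk_add_mk]
    congr 1 <;> ring
  have hμ_ψ : μ (some (reflect (-1) I)) = μ (some (I + (1, 1))) := by
    rw [← hμ.symm (I + (1, 1))]
    congr 2
    simp only [reflect, Prod.fst_add, Prod.snd_add]
    congr 1 <;> ring
  have hstep_ψ : step p hp (some (reflect (-1) I)) (some J) =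
      step p hp (some I) (some (reflect (-1) J)) := by
    rw [← step_reflect p hp I (reflect (-1) J) (-1), reflect_involutive]
  rw [hμ_ψ_succ, hμ_ψ, hstep_ψ]
  -- With ψ = reflect (-1), μ I - μ (I + 1) and step I J - step I (ψ J) have the same sign.
  rcases le_or_gt (-1) (I.1 + I.2) with hI | hI
  · rw [add_comm]
    exact ENNReal.mul_add_mul_le_mul_add_mul' (hμ.antitone I hI)
      (step_reflect_neg_one_le p hp I J hI hJ)
  · have hψ : -1 ≤ (reflect (-1) I).1 + (reflect (-1) I).2 := by simp only [reflect]; omega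
    have hμψ := hμ.antitone _ hψ
    have hstepψ := step_reflect_neg_one_le p hp _ J hψ hJ
    rw [hμ_ψ_succ, hμ_ψ] at hμψ
    rw [step_reflect, hstep_ψ] at hstepψ
    rw [add_comm (μ (some I) * _)]
    exact ENNReal.mul_add_mul_le_mul_add_mul' hμψ hstepψ

lemma isSymmUnimodal_dist (p : ℝ≥0∞) (hp : p < 1) (t : ℕ) :
    IsSymmUnimodal_s2 (dist p hp (some (0, 0)) t) := by
  induction t with
  | zero =>
    refine ⟨fun I => ?_, fun I hI => ?_⟩
    · simp only [dist, PMF.pure_apply, Option.some.injEq, reflect, Prod.ext_iff]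
      exact if_congr (by omega) rfl rfl
    · simp only [dist, PMF.pure_apply, Option.some.injEq, Prod.ext_iff, Prod.fst_add, Prod.snd_add]
      rw [if_neg (by omega)]
      exact zero_le
  | succ t ih => exact ih.bind_step p hp

lemma IsSymmUnimodal_s2.apply_add_le_of_le {μ : PMF State} (hμ : IsSymmUnimodal_s2 μ) {k : ℤ}
    (hk : 0 ≤ k) : ∀ I : ℤ × ℤ, -1 ≤ I.1 + I.2 → μ (some (I + (k, k))) ≤ μ (some I) := by
  induction k, hk using Int.leInduction with
  | base => simp
  | succ k _ ih =>
    intro I hI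
    have hI' : -1 ≤ (I + (1, 1)).1 + (I + (1, 1)).2 := by
      simp only [Prod.fst_add, Prod.snd_add]
      omega
    rw [show I + (k + 1, k + 1) = I + (1, 1) + (k, k) by
      simp only [Prod.ext_iff, Prod.fst_add, Prod.snd_add]; constructor <;> ring]
    exact (ih _ hI').trans (hμ.antitone I hI)

lemma IsSymmUnimodal_s2.apply_add_le {μ : PMF State} (hμ : IsSymmUnimodal_s2 μ) (I : ℤ × ℤ) {k : ℤ}
    (hk₀ : 0 ≤ k) (hk : 0 ≤ I.1 + I.2 + k) : μ (some (I + (k, k))) ≤ μ (some I) := by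
  rcases le_or_gt (-1) (I.1 + I.2) with hI | hI
  · exact hμ.apply_add_le_of_le hk₀ I hI
  · have hreflect : I + (k, k) = reflect 0 I + (I.1 + I.2 + k, I.1 + I.2 + k) := by
      simp only [reflect, Prod.ext_iff, Prod.fst_add, Prod.snd_add]
      omega
    rw [hreflect, ← hμ.symm I]
    exact hμ.apply_add_le_of_le hk _ (by simp only [reflect]; omega)

def swapEnd (x : ℤ) (I : ℤ × ℤ) : ℤ × ℤ :=
  if I.1 = x + 1 ∨ I.2 = x then reflect (2 * x + 1) I else I

lemma swapEnd_involutive (x : ℤ) : Function.Involutive (swapEnd x) := by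
  intro I
  unfold swapEnd
  split_ifs with h₁ h₂
  · exact reflect_involutive _ I
  · simp only [reflect] at h₂; omega
  · rfl

lemma toOuterMeasure_memS (μ : PMF State) (x : ℤ) :
    μ.toOuterMeasure {s | memS x s} = ∑' I : ℤ × ℤ, {s | memS x s}.indicator μ (some I) := by
  rw [PMF.toOuterMeasure_apply]
  refine ((Option.some_injective _).tsum_eq fun s hs => ?_).symm
  cases s with
  | none => simp [memS] at hs
  | some I => exact ⟨I, rfl⟩

lemma IsSymmUnimodal_s2.toOuterMeasure_memS_succ_le {μ : PMF State} (hμ : IsSymmUnimodal_s2 μ) {x : ℤ}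
    (hx : 0 ≤ x) : μ.toOuterMeasure {s | memS (x + 1) s} ≤ μ.toOuterMeasure {s | memS x s} := by
  rw [toOuterMeasure_memS, toOuterMeasure_memS]
  conv_rhs => rw [← Equiv.tsum_eq (swapEnd_involutive x).toPerm]
  refine ENNReal.tsum_le_tsum fun ⟨l, r⟩ => ?_
  simp only [Function.Involutive.coe_toPerm, Set.indicator_apply, Set.mem_ofPred_eq, memS, swapEnd,
    reflect]
  by_cases hI : l ≤ x + 1 ∧ x + 1 ≤ r
  swap
  · rw [if_neg hI]
    exact zero_le
  rw [if_pos hI]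
  by_cases hl : l = x + 1
  · rw [if_pos (Or.inl hl), if_pos (by omega)]
    have hshift : (2 * x + 1 - r, x) + (r - x, r - x) = (l, r) := by
      simp only [Prod.mk_add_mk, Prod.ext_iff]
      omega
    rw [← hshift, show 2 * x + 1 - l = x by omega]
    exact hμ.apply_add_le (2 * x + 1 - r, x) (by omega) (by omega)
  · rw [if_neg (show ¬(l = x + 1 ∨ r = x) by omega), if_pos (by omega)]

theorem occupancy_decreasing_right_general (p : ℝ≥0∞) (hp1 : p < 1) (t : ℕ)
    (x : ℤ) (hx : 0 ≤ x) :
    occ p hp1 0 t (x + 1) ≤ occ p hp1 0 t x :=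
  (isSymmUnimodal_dist p hp1 t).toOuterMeasure_memS_succ_le hx

/-- for the process started from {0} and x ≥ 0,
P(x ∈ ζ_t^O) ≥ P(x + 1 ∈ ζ_t^O). -/
theorem occupancy_decreasing_right (p : ℝ≥0∞) (hp0 : 0 < p) (hp1 : p < 1) (t : ℕ)
    (x : ℤ) (hx : 0 ≤ x) :
    occ p hp1 0 t (x + 1) ≤ occ p hp1 0 t x :=
  occupancy_decreasing_right_general p hp1 t x hx

end RFI
end
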